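/- arXiv:1708.05959 — 4 statements merged into one kernel-verified Lean document; each statement's English description precedes it below -/
import Mathlib

section
/- Suppose A and B are symmetric n×n matrices with 0 ⪯ A ⪯ I and A ≈_ε B for some 0 < ε ≤ 1/2, and suppose 0 < θ ≤ 1/2 satisfies ε/θ ≤ 1/10. Then I - (1-θ)A ≈_{3ε/θ} I - (1-θ)B, i.e., exp(-3ε/θ)(I - (1-θ)A) ⪯ I - (1-θ)B ⪯ exp(3ε/θ)(I - (1-θ)A). -/
/-!
Write `M = I - (1-θ)A` and `N = I - (1-θ)B`. Then
`N - e^{-t} M = (1 - e^{-t}) I - (1-θ)(B - e^{-t} A) ⪰ (1 - e^{-t}) I - (1-θ)(e^ε - e^{-t}) A`,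
and since `0 ⪯ A ⪯ I` this is `⪰ (1 - (1-θ)e^ε - θe^{-t}) I`; symmetrically
`e^t M - N ⪰ (θe^t + (1-θ)e^{-ε} - 1) I`. Both scalars are nonnegative for `t = 3ε/θ` by
`e^ε ≤ 1/(1-ε)` and `1 + t ≤ e^t`. Only the ordered-module structure of the Loewner order is used.
-/

open Real

/-- `X ≈_ε Y`. -/
def ExpApprox {M : Type*} [AddCommGroup M] [PartialOrder M] [Module ℝ M] (ε : ℝ) (X Y : M) :
    Prop :=
  exp (-ε) • X ≤ Y ∧ Y ≤ exp ε • X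

section Scalar

variable {ε θ t : ℝ}

lemma one_le_mul_exp_add_mul_exp_neg (hθ0 : 0 ≤ θ) (hθ1 : θ ≤ 1)
    (h : (1 - θ) * ε ≤ θ * t) : 1 ≤ θ * exp t + (1 - θ) * exp (-ε) := by
  nlinarith [mul_le_mul_of_nonneg_left (add_one_le_exp t) hθ0,
    mul_le_mul_of_nonneg_left (add_one_le_exp (-ε)) (sub_nonneg.2 hθ1)]

lemma mul_exp_add_mul_exp_neg_le_one (hθ0 : 0 ≤ θ) (hθ1 : θ ≤ 1) (hε1 : ε < 1) (ht : 0 ≤ t)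
    (h : ε * (1 + t - θ) ≤ θ * t) : (1 - θ) * exp ε + θ * exp (-t) ≤ 1 := by
  have hexp_ε : exp ε ≤ 1 / (1 - ε) := by
    rw [le_div_iff₀ (by linarith)]
    calc exp ε * (1 - ε) ≤ exp ε * exp (-ε) := by gcongr; linarith [add_one_le_exp (-ε)]
      _ = 1 := by rw [← exp_add, add_neg_cancel, exp_zero]
  have hexp_t : exp (-t) ≤ 1 / (1 + t) := by
    rw [exp_neg, inv_eq_one_div]
    exact one_div_le_one_div_of_le (by linarith) (by linarith [add_one_le_exp t])
  calc (1 - θ) * exp ε + θ * exp (-t) ≤ (1 - θ) * (1 / (1 - ε)) + θ * (1 / (1 + t)) := by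
        gcongr
    _ ≤ 1 := by
        rw [mul_one_div, mul_one_div, div_add_div _ _ (by linarith) (by linarith),
          div_le_one (by nlinarith)]
        nlinarith

end Scalar

section OrderedModule

variable {M : Type*} [AddCommGroup M] [PartialOrder M] [IsOrderedAddMonoid M] [Module ℝ M]
  [PosSMulMono ℝ M] {u A B : M} {ε θ t : ℝ}

lemma exp_neg_smul_sub_smul_le (hA0 : 0 ≤ A) (hAu : A ≤ u) (hBA : B ≤ exp ε • A)
    (hθ1 : θ ≤ 1) (htε : -t ≤ ε) (h : (1 - θ) * exp ε + θ * exp (-t) ≤ 1) :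
    exp (-t) • (u - (1 - θ) • A) ≤ u - (1 - θ) • B := by
  have hθ : 0 ≤ 1 - θ := sub_nonneg.2 hθ1
  have hB : 0 ≤ ((1 - θ) * exp ε) • A - (1 - θ) • B := by
    rw [sub_nonneg, mul_smul]
    exact smul_le_smul_of_nonneg_left hBA hθ
  have hA : 0 ≤ (1 - exp (-t)) • u - ((1 - θ) * (exp ε - exp (-t))) • A := by
    refine sub_nonneg.2 (smul_le_smul (by linarith) hAu ?_ (hA0.trans hAu))
    exact mul_nonneg hθ (sub_nonneg.2 (exp_le_exp.2 htε))
  calc exp (-t) • (u - (1 - θ) • A)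
      = u - (1 - θ) • B - ((1 - exp (-t)) • u - ((1 - θ) * (exp ε - exp (-t))) • A)
          - (((1 - θ) * exp ε) • A - (1 - θ) • B) := by module
    _ ≤ u - (1 - θ) • B := (sub_le_self _ hB).trans (sub_le_self _ hA)

lemma sub_smul_le_exp_smul_sub_smul (hA0 : 0 ≤ A) (hAu : A ≤ u) (hAB : exp (-ε) • A ≤ B)
    (hθ1 : θ ≤ 1) (htε : -ε ≤ t) (h : 1 ≤ θ * exp t + (1 - θ) * exp (-ε)) :
    u - (1 - θ) • B ≤ exp t • (u - (1 - θ) • A) := by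
  have hθ : 0 ≤ 1 - θ := sub_nonneg.2 hθ1
  have hB : 0 ≤ (1 - θ) • B - ((1 - θ) * exp (-ε)) • A := by
    rw [sub_nonneg, mul_smul]
    exact smul_le_smul_of_nonneg_left hAB hθ
  have hA : 0 ≤ (exp t - 1) • u - ((1 - θ) * (exp t - exp (-ε))) • A := by
    refine sub_nonneg.2 (smul_le_smul (by linarith) hAu ?_ (hA0.trans hAu))
    exact mul_nonneg hθ (sub_nonneg.2 (exp_le_exp.2 htε))
  calc u - (1 - θ) • B
      ≤ u - (1 - θ) • B + ((exp t - 1) • u - ((1 - θ) * (exp t - exp (-ε))) • A)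
          + ((1 - θ) • B - ((1 - θ) * exp (-ε)) • A) :=
        (le_add_of_nonneg_right hA).trans (le_add_of_nonneg_right hB)
    _ = exp t • (u - (1 - θ) • A) := by module

theorem ExpApprox.sub_one_sub_smul (hA0 : 0 ≤ A) (hAu : A ≤ u) (hAB : ExpApprox ε A B)
    (hε0 : 0 ≤ ε) (hε1 : ε < 1) (ht : 0 ≤ t) (hθ0 : 0 ≤ θ) (hθ1 : θ ≤ 1)
    (h : ε * (1 + t - θ) ≤ θ * t) :
    ExpApprox t (u - (1 - θ) • A) (u - (1 - θ) • B) :=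
  ⟨exp_neg_smul_sub_smul_le hA0 hAu hAB.2 hθ1 (by linarith)
      (mul_exp_add_mul_exp_neg_le_one hθ0 hθ1 hε1 ht h),
    sub_smul_le_exp_smul_sub_smul hA0 hAu hAB.1 hθ1 (by linarith)
      (one_le_mul_exp_add_mul_exp_neg hθ0 hθ1 (by nlinarith))⟩

end OrderedModule

open scoped MatrixOrder

theorem stmt_8_general (n : ℕ) (ε θ : ℝ) (A B : Matrix (Fin n) (Fin n) ℝ)
    (hA0 : A.PosSemidef) (hA1 : ((1 : Matrix (Fin n) (Fin n) ℝ) - A).PosSemidef)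
    (hε : 0 < ε)
    (hθ : 0 < θ) (hθ' : θ ≤ 1 / 2) (hεθ : ε / θ ≤ 1 / 10)
    (h1 : (B - Real.exp (-ε) • A).PosSemidef)
    (h2 : (Real.exp ε • A - B).PosSemidef) :
    (((1 : Matrix (Fin n) (Fin n) ℝ) - (1 - θ) • B) -
        Real.exp (-(3 * ε / θ)) • ((1 : Matrix (Fin n) (Fin n) ℝ) - (1 - θ) • A)).PosSemidef ∧
      (Real.exp (3 * ε / θ) • ((1 : Matrix (Fin n) (Fin n) ℝ) - (1 - θ) • A) -
        ((1 : Matrix (Fin n) (Fin n) ℝ) - (1 - θ) • B)).PosSemidef := by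
  have hε1 : ε ≤ θ / 10 := by rw [div_le_iff₀ hθ] at hεθ; linarith
  have ht : 3 * ε / θ ≤ 3 / 10 := by rw [mul_div_assoc]; linarith
  have hθt : θ * (3 * ε / θ) = 3 * ε := mul_div_cancel₀ _ hθ.ne'
  -- Under `MatrixOrder`, `X ≤ Y` is by definition `(Y - X).PosSemidef`, so the goal is an `ExpApprox`.
  exact ExpApprox.sub_one_sub_smul hA0.nonneg hA1 ⟨h1, h2⟩ hε.le (by linarith) (by positivity)
    hθ.le (by linarith) (by rw [hθt]; nlinarith)

theorem stmt_8 (n : ℕ) (ε θ : ℝ) (A B : Matrix (Fin n) (Fin n) ℝ)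
    (hAsymm : A.IsSymm) (hBsymm : B.IsSymm)
    (hA0 : A.PosSemidef) (hA1 : ((1 : Matrix (Fin n) (Fin n) ℝ) - A).PosSemidef)
    (hε : 0 < ε) (hε' : ε ≤ 1 / 2)
    (hθ : 0 < θ) (hθ' : θ ≤ 1 / 2) (hεθ : ε / θ ≤ 1 / 10)
    (h1 : (B - Real.exp (-ε) • A).PosSemidef)
    (h2 : (Real.exp ε • A - B).PosSemidef) :
    (((1 : Matrix (Fin n) (Fin n) ℝ) - (1 - θ) • B) -
        Real.exp (-(3 * ε / θ)) • ((1 : Matrix (Fin n) (Fin n) ℝ) - (1 - θ) • A)).PosSemidef ∧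
      (Real.exp (3 * ε / θ) • ((1 : Matrix (Fin n) (Fin n) ℝ) - (1 - θ) • A) -
        ((1 : Matrix (Fin n) (Fin n) ℝ) - (1 - θ) • B)).PosSemidef :=
  stmt_8_general n ε θ A B hA0 hA1 hε hθ hθ' hεθ h1 h2
end

section
/- Let L be the Laplacian of a connected weighted graph G on n vertices, e an edge of G with weight w(e) and incidence vector b_e, and 0 < θ ≤ 1/2. If 1 - (1-θ)·w(e)·b_eᵀL†b_e > 0, then (L - (1-θ)w(e)·b_e b_eᵀ)† = L† + (1-θ)·(w(e)·L† b_e b_eᵀ L†)/(1 - (1-θ)w(e)·b_eᵀ L† b_e). -/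
open Matrix

section Aux

variable {n : ℕ}

private lemma aux_mul_vvm (A : Matrix (Fin n) (Fin n) ℝ) (a b : Fin n → ℝ) :
    A * vecMulVec a b = vecMulVec (A *ᵥ a) b := by
  ext i j; simp [mul_apply, vecMulVec_apply, mulVec, dotProduct, Finset.sum_mul, mul_assoc]

private lemma aux_vvm_mul (a b : Fin n → ℝ) (A : Matrix (Fin n) (Fin n) ℝ) :
    vecMulVec a b * A = vecMulVec a (b ᵥ* A) := by
  ext i j; simp [mul_apply, vecMulVec_apply, vecMul, dotProduct, Finset.mul_sum, mul_assoc]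

private lemma aux_vvm_mulVec (a b c : Fin n → ℝ) : vecMulVec a b *ᵥ c = (b ⬝ᵥ c) • a := by
  ext i; simp only [vecMulVec_apply, mulVec, dotProduct, Pi.smul_apply, smul_eq_mul,
    Finset.sum_mul]
  exact Finset.sum_congr rfl fun x _ => by ring

private lemma aux_vecMul_vvm (a b c : Fin n → ℝ) : c ᵥ* vecMulVec a b = (c ⬝ᵥ a) • b := by
  ext i; simp only [vecMulVec_apply, vecMul, dotProduct, Pi.smul_apply, smul_eq_mul,
    Finset.sum_mul]
  exact Finset.sum_congr rfl fun x _ => by ring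

private lemma aux_vvm_smul_left (r : ℝ) (a b : Fin n → ℝ) :
    vecMulVec (r • a) b = r • vecMulVec a b := by
  ext i j; simp [vecMulVec_apply, mul_assoc]

private lemma aux_vvm_smul_right (r : ℝ) (a b : Fin n → ℝ) :
    vecMulVec a (r • b) = r • vecMulVec a b := by
  ext i j; simp [vecMulVec_apply]; ring

private lemma aux_vvm_transpose (a b : Fin n → ℝ) : (vecMulVec a b)ᵀ = vecMulVec b a := by
  ext i j; simp [vecMulVec_apply]; ring

private theorem aux_mp_unique (A X Y : Matrix (Fin n) (Fin n) ℝ)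
    (h1 : A*X*A = A) (h2 : X*A*X = X) (h3 : (A*X)ᵀ = A*X) (h4 : (X*A)ᵀ = X*A)
    (k1 : A*Y*A = A) (k2 : Y*A*Y = Y) (k3 : (A*Y)ᵀ = A*Y) (k4 : (Y*A)ᵀ = Y*A) : X = Y := by
  have hax : A*X = A*Y := by
    calc A*X = A*Y*A*X := by rw [k1]
    _ = (A*Y)*(A*X) := by rw [mul_assoc]
    _ = (A*Y)ᵀ*(A*X)ᵀ := by rw [k3, h3]
    _ = Yᵀ*(A*X*A)ᵀ := by simp [Matrix.transpose_mul, Matrix.mul_assoc]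
    _ = Yᵀ*Aᵀ := by rw [h1]
    _ = (A*Y)ᵀ := by rw [Matrix.transpose_mul]
    _ = A*Y := k3
  have hxa : X*A = Y*A := by
    calc X*A = X*(A*Y*A) := by rw [k1]
    _ = (X*A)*(Y*A) := by simp [Matrix.mul_assoc]
    _ = (X*A)ᵀ*(Y*A)ᵀ := by rw [h4, k4]
    _ = (A*X*A)ᵀ*Yᵀ := by simp [Matrix.transpose_mul, Matrix.mul_assoc]
    _ = Aᵀ*Yᵀ := by rw [h1]
    _ = (Y*A)ᵀ := by rw [Matrix.transpose_mul]
    _ = Y*A := k4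
  calc X = X*A*X := h2.symm
  _ = X*(A*Y) := by rw [mul_assoc, hax]
  _ = (X*A)*Y := by rw [mul_assoc]
  _ = Y*A*Y := by rw [hxa]
  _ = Y := k2

end Aux

theorem stmt_12 (n : ℕ) (hn : 0 < n) (θ : ℝ) (hθ0 : 0 < θ) (hθ1 : θ ≤ 1 / 2)
    (w : Fin n → Fin n → ℝ)
    (hw_symm : ∀ u v, w u v = w v u) (hw_nonneg : ∀ u v, 0 ≤ w u v)
    (hw_diag : ∀ u, w u u = 0)
    (L Ldag : Matrix (Fin n) (Fin n) ℝ)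
    (hL : L = Matrix.of fun u v => if u = v then ∑ x, w u x else -w u v)
    -- connectedness of G
    (hconn : ∀ x : Fin n → ℝ, L *ᵥ x = 0 → ∃ c : ℝ, ∀ i, x i = c)
    -- Ldag is the Moore–Penrose pseudoinverse of L
    (hMP1 : L * Ldag * L = L) (hMP2 : Ldag * L * Ldag = Ldag)
    (hMP3 : (L * Ldag)ᵀ = L * Ldag) (hMP4 : (Ldag * L)ᵀ = Ldag * L)
    -- e is an edge of G with endpoints u ≠ v, weight w(e) = w u v, incidence vector b
    (u v : Fin n) (huv : u ≠ v) (hedge : 0 < w u v)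
    (b : Fin n → ℝ)
    (hb : b = fun i => (if i = u then (1 : ℝ) else 0) - (if i = v then 1 else 0))
    -- the Laplacian after θ-deletion of e, and its Moore–Penrose pseudoinverse
    (M Mdag : Matrix (Fin n) (Fin n) ℝ)
    (hM : M = L - ((1 - θ) * w u v) • vecMulVec b b)
    (hconnM : ∀ x : Fin n → ℝ, M *ᵥ x = 0 → ∃ c : ℝ, ∀ i, x i = c)
    (hMP1' : M * Mdag * M = M) (hMP2' : Mdag * M * Mdag = Mdag)
    (hMP3' : (M * Mdag)ᵀ = M * Mdag) (hMP4' : (Mdag * M)ᵀ = Mdag * M)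
    (hden : 0 < 1 - (1 - θ) * w u v * (b ⬝ᵥ (Ldag *ᵥ b))) :
    Mdag = Ldag + ((1 - θ) * w u v / (1 - (1 - θ) * w u v * (b ⬝ᵥ (Ldag *ᵥ b)))) •
      vecMulVec (Ldag *ᵥ b) (b ᵥ* Ldag) := by
  -- basic symmetry facts
  have hLsym : Lᵀ = L := by
    subst hL; ext i j
    by_cases h : i = j
    · simp [h]
    · simp [transpose_apply, h, Ne.symm h, hw_symm j i]
  have hDsym : Ldagᵀ = Ldag := by
    refine aux_mp_unique L Ldagᵀ Ldag ?_ ?_ ?_ ?_ hMP1 hMP2 hMP3 hMP4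
    · have := congrArg Matrix.transpose hMP1
      simpa [Matrix.transpose_mul, hLsym, Matrix.mul_assoc] using this
    · have := congrArg Matrix.transpose hMP2
      simpa [Matrix.transpose_mul, hLsym, Matrix.mul_assoc] using this
    · have e3 : L * Ldagᵀ = Ldag * L := by
        calc L * Ldagᵀ = Lᵀ * Ldagᵀ := by rw [hLsym]
        _ = (Ldag * L)ᵀ := (Matrix.transpose_mul _ _).symm
        _ = Ldag * L := hMP4
      rw [e3]; exact hMP4
    · have e4 : Ldagᵀ * L = L * Ldag := by
        calc Ldagᵀ * L = Ldagᵀ * Lᵀ := by rw [hLsym]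
        _ = (L * Ldag)ᵀ := (Matrix.transpose_mul _ _).symm
        _ = L * Ldag := hMP3
      rw [e4]; exact hMP3
  have key2 : b ᵥ* Ldag = Ldag *ᵥ b := by
    rw [← hDsym, Matrix.mulVec_transpose, hDsym]
  -- row sums of L are zero
  have hLone : L *ᵥ (fun _ => (1:ℝ)) = 0 := by
    subst hL; ext i
    simp only [mulVec, dotProduct, of_apply, mul_one, Pi.zero_apply]
    rw [← Finset.add_sum_erase _ _ (Finset.mem_univ i)]
    simp only [if_pos rfl]
    rw [Finset.sum_congr rfl (fun j hj => if_neg (Ne.symm (Finset.ne_of_mem_erase hj)))]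
    rw [← Finset.add_sum_erase _ (fun x => w i x) (Finset.mem_univ i), hw_diag i, zero_add]
    simp
  have hbsum : ∑ i, b i = 0 := by
    subst hb; simp [Finset.sum_sub_distrib, Finset.sum_ite_eq]
  -- L L† b = b
  have hcomm : L * Ldag = Ldag * L := by
    calc L * Ldag = (L * Ldag)ᵀ := hMP3.symm
    _ = Ldagᵀ * Lᵀ := by rw [Matrix.transpose_mul]
    _ = Ldag * L := by rw [hDsym, hLsym]
  have hPb : (L * Ldag) *ᵥ b = b := by
    set x : Fin n → ℝ := b - (L * Ldag) *ᵥ b with hx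
    have hLx : L *ᵥ x = 0 := by
      have hLLd : L * (L * Ldag) = L := by
        rw [hcomm, ← Matrix.mul_assoc, hMP1]
      rw [hx, Matrix.mulVec_sub, Matrix.mulVec_mulVec, hLLd, sub_self]
    obtain ⟨c, hc⟩ := hconn x hLx
    have hxsum : ∑ i, x i = 0 := by
      have h1 : ∑ i, ((L * Ldag) *ᵥ b) i = (fun _ => (1:ℝ)) ⬝ᵥ ((L * Ldag) *ᵥ b) := by
        simp [dotProduct]
      have h2 : (fun _ => (1:ℝ)) ᵥ* (L * Ldag) = 0 := by
        rw [← Matrix.vecMul_vecMul]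
        have : (fun _ => (1:ℝ)) ᵥ* L = 0 := by
          rw [← hLsym, Matrix.mulVec_transpose] at hLone
          exact hLone
        rw [this, Matrix.zero_vecMul]
      rw [hx]
      simp only [Pi.sub_apply, Finset.sum_sub_distrib, hbsum, h1,
        Matrix.dotProduct_mulVec, h2, zero_dotProduct, sub_zero]
    have hc0 : c = 0 := by
      have : (n : ℝ) * c = 0 := by
        rw [← hxsum, Finset.sum_congr rfl (fun i _ => hc i)]
        simp [mul_comm]
      rcases mul_eq_zero.mp this with h | h
      · exact absurd h (by positivity)
      · exact h
    have hx0 : x = 0 := by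
      funext i; rw [hc i, hc0]; rfl
    have hbe : b - (L * Ldag) *ᵥ b = 0 := hx ▸ hx0
    exact (sub_eq_zero.mp hbe).symm
  rw [key2]
  set g := Ldag *ᵥ b with hg
  have key1 : L *ᵥ g = b := by rw [hg, Matrix.mulVec_mulVec, hPb]
  have haux : g ᵥ* L = b := by rw [← Matrix.mulVec_transpose, hLsym, key1]
  have hs0 : 1 - (1 - θ) * w u v * (b ⬝ᵥ g) ≠ 0 := ne_of_gt hden
  set s := 1 - (1 - θ) * w u v * (b ⬝ᵥ g) with hsdef
  set N := Ldag + ((1 - θ) * w u v / s) • vecMulVec g g with hN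
  have hMN : M * N = L * Ldag := by
    rw [hM, hN]
    simp only [sub_mul, mul_add, add_mul, Matrix.smul_mul, Matrix.mul_smul, aux_mul_vvm,
      aux_vvm_mul, aux_vecMul_vvm, aux_vvm_mulVec, aux_vvm_smul_left, aux_vvm_smul_right,
      key1, key2, haux, ← hg]
    match_scalars <;> field_simp <;> rw [hsdef] <;> ring
  have hPM : (L * Ldag) * M = M := by
    rw [hM, mul_sub, hMP1, Matrix.mul_smul, aux_mul_vvm, hPb]
  have hNsym : Nᵀ = N := by
    rw [hN]; simp [Matrix.transpose_add, Matrix.transpose_smul, aux_vvm_transpose, hDsym]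
  have hMsym : Mᵀ = M := by
    rw [hM]; simp [Matrix.transpose_sub, Matrix.transpose_smul, aux_vvm_transpose, hLsym]
  have hNM : N * M = L * Ldag := by
    have h1 : (N * M)ᵀ = L * Ldag := by
      rw [Matrix.transpose_mul, hMsym, hNsym, hMN]
    calc N * M = (N * M)ᵀᵀ := (transpose_transpose _).symm
    _ = (L * Ldag)ᵀ := by rw [h1]
    _ = L * Ldag := hMP3
  have hNP : N * (L * Ldag) = N := by
    have hgP : g ᵥ* (L * Ldag) = g := by
      rw [← Matrix.vecMul_vecMul, haux, key2]
    rw [hN, add_mul, Matrix.smul_mul, aux_vvm_mul, ← Matrix.mul_assoc, hMP2, hgP]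
  have hPN : (L * Ldag) * N = N := by
    have h1 : ((L * Ldag) * N)ᵀ = N := by
      rw [Matrix.transpose_mul, hNsym, hMP3, hNP]
    calc (L * Ldag) * N = ((L * Ldag) * N)ᵀᵀ := (transpose_transpose _).symm
    _ = Nᵀ := by rw [h1]
    _ = N := hNsym
  have c1 : M * N * M = M := by rw [hMN, hPM]
  have c2 : N * M * N = N := by rw [hNM, hPN]
  have c3 : (M * N)ᵀ = M * N := by rw [hMN]; exact hMP3
  have c4 : (N * M)ᵀ = N * M := by rw [hNM]; exact hMP3
  exact aux_mp_unique M Mdag N hMP1' hMP2' hMP3' hMP4' c1 c2 c3 c4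
end

section
/- Let L be the Laplacian of a connected weighted graph, T a subset of edges with edge-vertex incidence matrix B_T and diagonal weight matrix W_T, and 0 < θ < 1. Assume L - (1-θ)B_TᵀW_T B_T is the Laplacian of a connected graph. Then (L - (1-θ)B_TᵀW_T B_T)† = L† + (1-θ)·L†B_Tᵀ W_T^{1/2} (I - (1-θ)W_T^{1/2}B_T L† B_Tᵀ W_T^{1/2})⁻¹ W_T^{1/2} B_T L†. -/
/-!
Write `BᵀWB = CᵀC` with `C = W^{1/2}B`. Since `L ⪰ CᵀC`, every vector killed by `L` is killed
by `C`, so the range of `Cᵀ` lies in the range of `L`, i.e. `L L† Cᵀ = Cᵀ`. Under this range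
condition the Woodbury computation goes through with `L†` in place of `L⁻¹`: the candidate `Y`
satisfies `M Y = Y M = L L†`, which yields the four Penrose equations for `M`, and uniqueness of
the pseudoinverse finishes. The inverse exists because `A = C L† Cᵀ` satisfies
`A - A² = (L†Cᵀ)ᵀ (L - CᵀC) (L†Cᵀ) ⪰ 0`, so `0 ⪯ A ⪯ 1` and `1 - (1 - θ) A` is positive definite.
-/

open Matrix

namespace Matrix

variable {m n R : Type*} [Fintype n] [CommRing R]

/-- The Penrose equations, with the transpose in place of the conjugate transpose. -/
structure IsMoorePenroseInverse [Fintype m] (A : Matrix m n R) (X : Matrix n m R) : Prop where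
  mul_mul_self : A * X * A = A
  mul_mul_self' : X * A * X = X
  transpose_mul : (A * X)ᵀ = A * X
  transpose_mul' : (X * A)ᵀ = X * A

namespace IsMoorePenroseInverse

section Rectangular

variable [Fintype m] {A : Matrix m n R} {X Y : Matrix n m R}

theorem mul_left_eq (hX : IsMoorePenroseInverse A X) (hY : IsMoorePenroseInverse A Y) :
    A * X = A * Y :=
  calc A * X = (A * Y * A * X)ᵀ := by rw [hY.mul_mul_self, hX.transpose_mul]
    _ = (A * X)ᵀ * (A * Y)ᵀ := by rw [← Matrix.transpose_mul, Matrix.mul_assoc (A * Y)]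
    _ = A * X * A * Y := by rw [hX.transpose_mul, hY.transpose_mul, ← Matrix.mul_assoc]
    _ = A * Y := by rw [hX.mul_mul_self]

theorem mul_right_eq (hX : IsMoorePenroseInverse A X) (hY : IsMoorePenroseInverse A Y) :
    X * A = Y * A :=
  calc X * A = (X * (A * Y * A))ᵀ := by rw [hY.mul_mul_self, hX.transpose_mul']
    _ = (Y * A)ᵀ * (X * A)ᵀ := by simp only [← Matrix.transpose_mul, Matrix.mul_assoc]
    _ = Y * (A * X * A) := by
      rw [hX.transpose_mul', hY.transpose_mul', Matrix.mul_assoc, Matrix.mul_assoc]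
    _ = Y * A := by rw [hX.mul_mul_self]

theorem unique (hX : IsMoorePenroseInverse A X) (hY : IsMoorePenroseInverse A Y) : X = Y :=
  calc X = X * (A * X) := by rw [← Matrix.mul_assoc, hX.mul_mul_self']
    _ = Y * A * Y := by rw [hX.mul_left_eq hY, ← Matrix.mul_assoc, hX.mul_right_eq hY]
    _ = Y := hY.mul_mul_self'

theorem transpose (hX : IsMoorePenroseInverse A X) : IsMoorePenroseInverse Aᵀ Xᵀ where
  mul_mul_self := by
    simpa only [Matrix.transpose_mul, Matrix.mul_assoc] using
      congrArg Matrix.transpose hX.mul_mul_self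
  mul_mul_self' := by
    simpa only [Matrix.transpose_mul, Matrix.mul_assoc] using
      congrArg Matrix.transpose hX.mul_mul_self'
  transpose_mul := by rw [← Matrix.transpose_mul]; exact congrArg _ hX.transpose_mul'
  transpose_mul' := by rw [← Matrix.transpose_mul]; exact congrArg _ hX.transpose_mul

end Rectangular

variable {L X : Matrix n n R}

theorem transpose_eq_of_isSymm (hX : IsMoorePenroseInverse L X) (hL : L.IsSymm) : Xᵀ = X :=
  (hL.eq ▸ hX.transpose).unique hX

theorem mul_comm_of_isSymm (hX : IsMoorePenroseInverse L X) (hL : L.IsSymm) :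
    L * X = X * L := by
  rw [← hX.transpose_mul, Matrix.transpose_mul, hX.transpose_eq_of_isSymm hL, hL.eq]

theorem mul_mul_transpose_eq (hX : IsMoorePenroseInverse L X) (hL : L.IsSymm) {C : Matrix m n R}
    (hC : C * X * L = C) : L * X * Cᵀ = Cᵀ := by
  simpa only [Matrix.transpose_mul, hL.eq, hX.transpose_eq_of_isSymm hL, Matrix.mul_assoc]
    using congrArg Matrix.transpose hC

end IsMoorePenroseInverse

section Woodbury

variable [Fintype m] [DecidableEq m] (X : Matrix n n R) (U : Matrix n m R) (V : Matrix m n R) (c : R)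

noncomputable def woodburyUpdate : Matrix n n R :=
  X + c • (X * U * (1 - c • (V * X * U))⁻¹ * V * X)

variable {L X U V c}

theorem sub_smul_mul_mul_woodburyUpdate (hU : L * X * U = U)
    (hS : IsUnit (1 - c • (V * X * U)).det) :
    (L - c • (U * V)) * woodburyUpdate X U V c = L * X := by
  set S := 1 - c • (V * X * U)
  have hMXU : (L - c • (U * V)) * (X * U) = U * S := by
    rw [Matrix.sub_mul, ← Matrix.mul_assoc, hU, Matrix.smul_mul, Matrix.mul_sub, Matrix.mul_one,
      Matrix.mul_smul]
    simp only [Matrix.mul_assoc]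
  calc (L - c • (U * V)) * woodburyUpdate X U V c
      = (L - c • (U * V)) * X + c • ((L - c • (U * V)) * (X * U) * S⁻¹ * V * X) := by
        simp only [woodburyUpdate, Matrix.mul_add, Matrix.mul_smul, Matrix.mul_assoc, S]
    _ = (L - c • (U * V)) * X + c • (U * V * X) := by
        rw [hMXU, Matrix.mul_assoc U, mul_nonsing_inv _ hS, Matrix.mul_one]
    _ = L * X := by rw [Matrix.sub_mul, Matrix.smul_mul, sub_add_cancel]

theorem woodburyUpdate_mul_sub_smul_mul (hV : V * X * L = V)
    (hS : IsUnit (1 - c • (V * X * U)).det) :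
    woodburyUpdate X U V c * (L - c • (U * V)) = X * L := by
  set S := 1 - c • (V * X * U)
  have hVXM : V * X * (L - c • (U * V)) = S * V := by
    rw [Matrix.mul_sub, hV, Matrix.mul_smul, Matrix.sub_mul, Matrix.one_mul, Matrix.smul_mul]
    simp only [Matrix.mul_assoc]
  calc woodburyUpdate X U V c * (L - c • (U * V))
      = X * (L - c • (U * V)) + c • (X * U * S⁻¹ * (V * X * (L - c • (U * V)))) := by
        simp only [woodburyUpdate, Matrix.add_mul, Matrix.smul_mul, Matrix.mul_assoc, S]
    _ = X * (L - c • (U * V)) + c • (X * U * V) := by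
        rw [hVXM, ← Matrix.mul_assoc, Matrix.mul_assoc (X * U), nonsing_inv_mul _ hS,
          Matrix.mul_one]
    _ = X * L := by rw [Matrix.mul_sub, Matrix.mul_smul, ← Matrix.mul_assoc, sub_add_cancel]

theorem IsMoorePenroseInverse.sub_smul_transpose_mul {C : Matrix m n R}
    (hX : IsMoorePenroseInverse L X) (hL : L.IsSymm) (hC : C * X * L = C)
    (hS : IsUnit (1 - c • (C * X * Cᵀ)).det) :
    IsMoorePenroseInverse (L - c • (Cᵀ * C)) (woodburyUpdate X Cᵀ C c) := by
  have hCt := hX.mul_mul_transpose_eq hL hC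
  have hMY := sub_smul_mul_mul_woodburyUpdate hCt hS
  have hYM : woodburyUpdate X Cᵀ C c * (L - c • (Cᵀ * C)) = L * X := by
    rw [woodburyUpdate_mul_sub_smul_mul hC hS, hX.mul_comm_of_isSymm hL]
  have hPM : L * X * (L - c • (Cᵀ * C)) = L - c • (Cᵀ * C) := by
    rw [Matrix.mul_sub, hX.mul_mul_self, Matrix.mul_smul, ← Matrix.mul_assoc, hCt]
  have hPX : L * X * X = X := by rw [hX.mul_comm_of_isSymm hL, hX.mul_mul_self']
  have hPY : L * X * woodburyUpdate X Cᵀ C c = woodburyUpdate X Cᵀ C c := by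
    simp only [woodburyUpdate, Matrix.mul_add, Matrix.mul_smul, ← Matrix.mul_assoc, hPX]
  exact ⟨by rw [hMY, hPM], by rw [hYM, hPY], by rw [hMY, hX.transpose_mul],
    by rw [hYM, hX.transpose_mul]⟩

end Woodbury

section Real

variable [Fintype m]

theorem posDef_one_sub_smul [DecidableEq m] {A : Matrix m m ℝ} (hA : A.IsSymm)
    (hAA : (A - A * A).PosSemidef) {c : ℝ} (hc : c < 1) : (1 - c • A).PosDef := by
  refine .of_dotProduct_mulVec_pos ?_ fun y hy => ?_
  · simpa only [isHermitian_iff_isSymm] using isSymm_one.sub (hA.smul c)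
  set z := A *ᵥ y
  have hyA : y ᵥ* A = z := by rw [← hA.eq, vecMul_transpose]
  have hzz : z ⬝ᵥ z ≤ y ⬝ᵥ z := by
    have := hAA.dotProduct_mulVec_nonneg y
    rwa [star_trivial, sub_mulVec, ← mulVec_mulVec, dotProduct_sub, dotProduct_mulVec y A z, hyA,
      sub_nonneg] at this
  have hsq (v : m → ℝ) : 0 ≤ v ⬝ᵥ v := by simpa using dotProduct_star_self_nonneg v
  have hyz := hsq (y - z)
  have hyy : 0 < y ⬝ᵥ y := (hsq y).lt_of_ne' (dotProduct_self_eq_zero.not.mpr hy)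
  have hz := hsq z
  rw [star_trivial, sub_mulVec, one_mulVec, smul_mulVec, dotProduct_sub, dotProduct_smul,
    smul_eq_mul]
  rw [sub_dotProduct, dotProduct_sub, dotProduct_sub, dotProduct_comm z y] at hyz
  rcases le_or_gt c 0 with h | h <;> nlinarith

namespace IsMoorePenroseInverse

variable {L X : Matrix n n ℝ} {C : Matrix m n ℝ}

theorem mul_mul_eq_of_posSemidef_sub [DecidableEq n] (hX : IsMoorePenroseInverse L X)
    (hLC : (L - Cᵀ * C).PosSemidef) : C * X * L = C := by
  -- `Q` projects onto `ker L`, and `L ⪰ CᵀC` forces `C Q = 0`.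
  set Q := 1 - X * L
  have hLQ : L * Q = 0 := by
    rw [Matrix.mul_sub, Matrix.mul_one, ← Matrix.mul_assoc, hX.mul_mul_self, sub_self]
  have hneg : (-((C * Q)ᴴ * (C * Q))).PosSemidef := by
    convert hLC.conjTranspose_mul_mul_same Q using 1
    simp only [conjTranspose_eq_transpose_of_trivial, Matrix.transpose_mul, Matrix.mul_sub,
      Matrix.sub_mul, Matrix.mul_assoc, hLQ, Matrix.mul_zero, zero_sub]
  have htr : ((C * Q)ᴴ * (C * Q)).trace = 0 := by
    have := hneg.trace_nonneg
    rw [trace_neg, neg_nonneg] at this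
    exact this.antisymm (posSemidef_conjTranspose_mul_self _).trace_nonneg
  have hCQ := trace_conjTranspose_mul_self_eq_zero_iff.mp htr
  rwa [Matrix.mul_sub, Matrix.mul_one, sub_eq_zero, eq_comm, ← Matrix.mul_assoc] at hCQ

theorem posDef_one_sub_smul_mul_mul_transpose [DecidableEq m] [DecidableEq n]
    (hX : IsMoorePenroseInverse L X) (hL : L.IsSymm) (hLC : (L - Cᵀ * C).PosSemidef) {c : ℝ}
    (hc : c < 1) : (1 - c • (C * X * Cᵀ)).PosDef := by
  have hXs := hX.transpose_eq_of_isSymm hL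
  have hCt : L * (X * Cᵀ) = Cᵀ := by
    rw [← Matrix.mul_assoc, hX.mul_mul_transpose_eq hL (hX.mul_mul_eq_of_posSemidef_sub hLC)]
  refine posDef_one_sub_smul ?_ ?_ hc
  · simp only [IsSymm, Matrix.transpose_mul, transpose_transpose, hXs, Matrix.mul_assoc]
  · convert hLC.conjTranspose_mul_mul_same (X * Cᵀ) using 1
    simp only [conjTranspose_eq_transpose_of_trivial, Matrix.transpose_mul, transpose_transpose,
      hXs, Matrix.mul_sub, Matrix.sub_mul, Matrix.mul_assoc, hCt]

end IsMoorePenroseInverse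

end Real

end Matrix

theorem stmt_13_general (n : ℕ) (θ : ℝ) (hθ0 : 0 < θ)
    (L Ldag : Matrix (Fin n) (Fin n) ℝ)
    -- Ldag is the Moore–Penrose pseudoinverse of L
    (hMP1 : L * Ldag * L = L) (hMP2 : Ldag * L * Ldag = Ldag)
    (hMP3 : (L * Ldag)ᵀ = L * Ldag) (hMP4 : (Ldag * L)ᵀ = Ldag * L)
    -- T is a set of edges of G, with incidence matrix B and weights wt
    (T : Type) [Fintype T] [DecidableEq T]
    (B : Matrix T (Fin n) ℝ) (wt : T → ℝ) (hwt : ∀ e, 0 < wt e)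
    (W sqrtW : Matrix T T ℝ)
    (hW : W = Matrix.diagonal wt)
    (hsqrtW : sqrtW = Matrix.diagonal fun e => Real.sqrt (wt e))
    -- since T ⊆ E, BᵀWB ⪯ L
    (hsub : (L - Bᵀ * W * B).PosSemidef)
    -- the Laplacian after θ-deletion of T, assumed connected, and its pseudoinverse
    (M Mdag : Matrix (Fin n) (Fin n) ℝ)
    (hM : M = L - (1 - θ) • (Bᵀ * W * B))
    (hMP1' : M * Mdag * M = M) (hMP2' : Mdag * M * Mdag = Mdag)
    (hMP3' : (M * Mdag)ᵀ = M * Mdag) (hMP4' : (Mdag * M)ᵀ = Mdag * M) :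
    Mdag = Ldag + (1 - θ) • (Ldag * Bᵀ * sqrtW *
      ((1 : Matrix T T ℝ) - (1 - θ) • (sqrtW * B * Ldag * Bᵀ * sqrtW))⁻¹ *
      sqrtW * B * Ldag) := by
  set C := sqrtW * B
  have hCt : Cᵀ = Bᵀ * sqrtW := by rw [Matrix.transpose_mul, hsqrtW, diagonal_transpose]
  have hWC : Bᵀ * W * B = Cᵀ * C := by
    have hsq : sqrtW * sqrtW = W := by
      rw [hsqrtW, hW, diagonal_mul_diagonal]
      exact congrArg diagonal (funext fun e => Real.mul_self_sqrt (hwt e).le)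
    rw [hCt, ← hsq]
    simp only [C, Matrix.mul_assoc]
  rw [hWC] at hsub hM
  have hX : IsMoorePenroseInverse L Ldag := ⟨hMP1, hMP2, hMP3, hMP4⟩
  have hL : L.IsSymm := by
    simpa [isHermitian_iff_isSymm] using
      hsub.isHermitian.add (posSemidef_conjTranspose_mul_self C).isHermitian
  have hS := (hX.posDef_one_sub_smul_mul_mul_transpose hL hsub (by linarith : 1 - θ < 1)).isUnit
  have hY := hX.sub_smul_transpose_mul hL (hX.mul_mul_eq_of_posSemidef_sub hsub)
    ((isUnit_iff_isUnit_det _).mp hS)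
  rw [← hM] at hY
  rw [IsMoorePenroseInverse.unique ⟨hMP1', hMP2', hMP3', hMP4'⟩ hY, woodburyUpdate, hCt]
  simp only [C, Matrix.mul_assoc]

theorem stmt_13 (n : ℕ) (hn : 0 < n) (θ : ℝ) (hθ0 : 0 < θ) (hθ1 : θ < 1)
    (w : Fin n → Fin n → ℝ)
    (hw_symm : ∀ u v, w u v = w v u) (hw_nonneg : ∀ u v, 0 ≤ w u v)
    (hw_diag : ∀ u, w u u = 0)
    (L Ldag : Matrix (Fin n) (Fin n) ℝ)
    (hL : L = Matrix.of fun u v => if u = v then ∑ x, w u x else -w u v)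
    -- connectedness of G
    (hconn : ∀ x : Fin n → ℝ, L *ᵥ x = 0 → ∃ c : ℝ, ∀ i, x i = c)
    -- Ldag is the Moore–Penrose pseudoinverse of L
    (hMP1 : L * Ldag * L = L) (hMP2 : Ldag * L * Ldag = Ldag)
    (hMP3 : (L * Ldag)ᵀ = L * Ldag) (hMP4 : (Ldag * L)ᵀ = Ldag * L)
    -- T is a set of edges of G, with incidence matrix B and weights wt
    (T : Type) [Fintype T] [DecidableEq T]
    (B : Matrix T (Fin n) ℝ) (wt : T → ℝ) (hwt : ∀ e, 0 < wt e)
    (hB : ∀ e : T, ∃ p q : Fin n, p ≠ q ∧ wt e = w p q ∧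
      B e = fun i => (if i = p then (1 : ℝ) else 0) - (if i = q then 1 else 0))
    (W sqrtW : Matrix T T ℝ)
    (hW : W = Matrix.diagonal wt)
    (hsqrtW : sqrtW = Matrix.diagonal fun e => Real.sqrt (wt e))
    -- since T ⊆ E, BᵀWB ⪯ L
    (hsub : (L - Bᵀ * W * B).PosSemidef)
    -- the Laplacian after θ-deletion of T, assumed connected, and its pseudoinverse
    (M Mdag : Matrix (Fin n) (Fin n) ℝ)
    (hM : M = L - (1 - θ) • (Bᵀ * W * B))
    (hconnM : ∀ x : Fin n → ℝ, M *ᵥ x = 0 → ∃ c : ℝ, ∀ i, x i = c)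
    (hMP1' : M * Mdag * M = M) (hMP2' : Mdag * M * Mdag = Mdag)
    (hMP3' : (M * Mdag)ᵀ = M * Mdag) (hMP4' : (Mdag * M)ᵀ = Mdag * M) :
    Mdag = Ldag + (1 - θ) • (Ldag * Bᵀ * sqrtW *
      ((1 : Matrix T T ℝ) - (1 - θ) • (sqrtW * B * Ldag * Bᵀ * sqrtW))⁻¹ *
      sqrtW * B * Ldag) :=
  stmt_13_general n θ hθ0 L Ldag hMP1 hMP2 hMP3 hMP4 T B wt hwt W sqrtW hW hsqrtW hsub M Mdag hM
    hMP1' hMP2' hMP3' hMP4'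
end

section
/- Let L be the Laplacian of a connected weighted graph on n vertices with all weights in [1,U], satisfying L† ⪯ 2n⁴U²·I and b_e b_eᵀ ⪯ L for each edge e. Let z be a vector with ‖z‖² ≤ n, and y a vector with ‖y - L†z‖_L ≤ δ‖L†z‖_L for some 0 < δ < 1, where ‖x‖_L = √(xᵀLx). Then for any edge e, |yᵀb_e b_eᵀ y - zᵀ L† b_e b_eᵀ L† z| ≤ 6δn⁵U². -/
/-!
Write `x = L† z`. Since `b bᵀ ⪯ L`, the linear form `t ↦ bᵀ t` is bounded by the `L`-norm, so
`p = bᵀ y` and `q = bᵀ x` satisfy `|p - q| ≤ ‖y - x‖_L ≤ δ ‖x‖_L` and `|q| ≤ ‖x‖_L`, whence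
`|p² - q²| ≤ 3δ ‖x‖_L²`. Finally `‖x‖_L² = zᵀ L† L L† z = zᵀ L† z ≤ 2n⁴U² ‖z‖² ≤ 2n⁵U²`, where
`L†` is symmetric because `2n⁴U² I - L†` is positive semidefinite.
-/

open Matrix

theorem isSymm_of_posSemidef_smul_one_sub {ι : Type*} [DecidableEq ι] {A : Matrix ι ι ℝ} {c : ℝ}
    (h : (c • 1 - A).PosSemidef) : A.IsSymm := by
  simpa using (isSymm_one.smul c).sub (isHermitian_iff_isSymm.1 h.isHermitian)

section

variable {ι R : Type*} [Fintype ι] [CommRing R]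

theorem dotProduct_vecMulVec_self_mulVec (b x : ι → R) :
    x ⬝ᵥ (vecMulVec b b *ᵥ x) = (b ⬝ᵥ x) ^ 2 := by
  rw [vecMulVec_mulVec, op_smul_eq_smul, dotProduct_smul, smul_eq_mul, dotProduct_comm, sq]

theorem dotProduct_mul_mul_mulVec_of_isSymm {A : Matrix ι ι R} (hA : A.IsSymm)
    (M : Matrix ι ι R) (z : ι → R) :
    z ⬝ᵥ ((A * M * A) *ᵥ z) = (A *ᵥ z) ⬝ᵥ (M *ᵥ (A *ᵥ z)) := by
  rw [← mulVec_mulVec, ← mulVec_mulVec, dotProduct_mulVec, ← mulVec_transpose, hA.eq]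

end

section

variable {ι : Type*} [Fintype ι]

theorem sq_dotProduct_le_of_posSemidef_sub_vecMulVec {L : Matrix ι ι ℝ} {b : ι → ℝ}
    (h : (L - vecMulVec b b).PosSemidef) (x : ι → ℝ) : (b ⬝ᵥ x) ^ 2 ≤ x ⬝ᵥ (L *ᵥ x) := by
  have := h.dotProduct_mulVec_nonneg x
  rw [star_trivial, sub_mulVec, dotProduct_sub, dotProduct_vecMulVec_self_mulVec] at this
  linarith

variable [DecidableEq ι]

theorem dotProduct_mulVec_le_of_posSemidef_smul_one_sub {A : Matrix ι ι ℝ} {c : ℝ}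
    (h : (c • 1 - A).PosSemidef) (x : ι → ℝ) : x ⬝ᵥ (A *ᵥ x) ≤ c * (x ⬝ᵥ x) := by
  have := h.dotProduct_mulVec_nonneg x
  rw [star_trivial, sub_mulVec, dotProduct_sub, smul_mulVec, one_mulVec, dotProduct_smul,
    smul_eq_mul] at this
  linarith

end

theorem abs_sq_sub_sq_le {p q s δ : ℝ} (hδ0 : 0 ≤ δ) (hδ1 : δ ≤ 1) (hq : |q| ≤ s)
    (hpq : |p - q| ≤ δ * s) : |p ^ 2 - q ^ 2| ≤ 3 * δ * s ^ 2 := by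
  have hs : 0 ≤ s := (abs_nonneg q).trans hq
  calc |p ^ 2 - q ^ 2| = |p - q| * |(p - q) + 2 * q| := by rw [← abs_mul]; ring_nf
    _ ≤ δ * s * (δ * s + 2 * s) := by
        gcongr
        calc |(p - q) + 2 * q| ≤ |p - q| + |2 * q| := abs_add_le _ _
          _ ≤ δ * s + 2 * s := by rw [abs_mul, abs_two]; linarith
    _ ≤ 3 * δ * s ^ 2 := by nlinarith [mul_nonneg hδ0 (mul_nonneg hs hs)]

theorem stmt_17_general (n : ℕ) (U : ℝ)
    (L Ldag : Matrix (Fin n) (Fin n) ℝ)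
    -- Ldag is the Moore–Penrose pseudoinverse of L
    (hMP2 : Ldag * L * Ldag = Ldag)
    -- L† ⪯ 2n⁴U²·I
    (hLdagBound : ((2 * (n : ℝ) ^ 4 * U ^ 2) • (1 : Matrix (Fin n) (Fin n) ℝ) -
      Ldag).PosSemidef)
    -- the vectors z and y
    (z y : Fin n → ℝ) (δ : ℝ) (hδ0 : 0 < δ) (hδ1 : δ < 1)
    (hz : (∑ i, (z i) ^ 2) ≤ (n : ℝ))
    (hy : Real.sqrt ((y - Ldag *ᵥ z) ⬝ᵥ (L *ᵥ (y - Ldag *ᵥ z))) ≤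
      δ * Real.sqrt ((Ldag *ᵥ z) ⬝ᵥ (L *ᵥ (Ldag *ᵥ z))))
    -- e is an edge with incidence vector b_e = e_u - e_v, and b_e b_eᵀ ⪯ L
    (b : Fin n → ℝ)
    (hbL : (L - vecMulVec b b).PosSemidef) :
    |y ⬝ᵥ (vecMulVec b b *ᵥ y) - z ⬝ᵥ ((Ldag * vecMulVec b b * Ldag) *ᵥ z)| ≤
      6 * δ * (n : ℝ) ^ 5 * U ^ 2 := by
  have hLdag := isSymm_of_posSemidef_smul_one_sub hLdagBound
  set x := Ldag *ᵥ z
  have hbL' := sq_dotProduct_le_of_posSemidef_sub_vecMulVec hbL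
  have henergy : x ⬝ᵥ (L *ᵥ x) ≤ 2 * (n : ℝ) ^ 5 * U ^ 2 := calc
    x ⬝ᵥ (L *ᵥ x) = z ⬝ᵥ (Ldag *ᵥ z) := by
      rw [← dotProduct_mul_mul_mulVec_of_isSymm hLdag, hMP2]
    _ ≤ 2 * (n : ℝ) ^ 4 * U ^ 2 * (z ⬝ᵥ z) :=
      dotProduct_mulVec_le_of_posSemidef_smul_one_sub hLdagBound z
    _ ≤ 2 * (n : ℝ) ^ 4 * U ^ 2 * n := by gcongr; simpa [dotProduct, sq] using hz
    _ = 2 * (n : ℝ) ^ 5 * U ^ 2 := by ring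
  have hq : |b ⬝ᵥ x| ≤ √(x ⬝ᵥ (L *ᵥ x)) := Real.abs_le_sqrt (hbL' x)
  have hpq : |b ⬝ᵥ y - b ⬝ᵥ x| ≤ δ * √(x ⬝ᵥ (L *ᵥ x)) := by
    rw [← dotProduct_sub]
    exact (Real.abs_le_sqrt (hbL' _)).trans hy
  rw [dotProduct_vecMulVec_self_mulVec, dotProduct_mul_mul_mulVec_of_isSymm hLdag,
    dotProduct_vecMulVec_self_mulVec]
  calc _ ≤ 3 * δ * √(x ⬝ᵥ (L *ᵥ x)) ^ 2 := abs_sq_sub_sq_le hδ0.le hδ1.le hq hpq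
    _ ≤ 3 * δ * (2 * (n : ℝ) ^ 5 * U ^ 2) := by
      rw [Real.sq_sqrt ((sq_nonneg _).trans (hbL' x))]
      gcongr
    _ = 6 * δ * (n : ℝ) ^ 5 * U ^ 2 := by ring

theorem stmt_17 (n : ℕ) (hn : 0 < n) (U : ℝ) (hU : 1 ≤ U)
    (w : Fin n → Fin n → ℝ)
    (hw_symm : ∀ u v, w u v = w v u)
    (hw_range : ∀ u v, w u v = 0 ∨ (1 ≤ w u v ∧ w u v ≤ U))
    (hw_diag : ∀ u, w u u = 0)
    (L Ldag : Matrix (Fin n) (Fin n) ℝ)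
    (hL : L = Matrix.of fun u v => if u = v then ∑ x, w u x else -w u v)
    -- connectedness: the kernel of L is spanned by the all-ones vector
    (hconn : ∀ x : Fin n → ℝ, L *ᵥ x = 0 → ∃ c : ℝ, ∀ i, x i = c)
    -- Ldag is the Moore–Penrose pseudoinverse of L
    (hMP1 : L * Ldag * L = L) (hMP2 : Ldag * L * Ldag = Ldag)
    (hMP3 : (L * Ldag)ᵀ = L * Ldag) (hMP4 : (Ldag * L)ᵀ = Ldag * L)
    -- L† ⪯ 2n⁴U²·I
    (hLdagBound : ((2 * (n : ℝ) ^ 4 * U ^ 2) • (1 : Matrix (Fin n) (Fin n) ℝ) -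
      Ldag).PosSemidef)
    -- the vectors z and y
    (z y : Fin n → ℝ) (δ : ℝ) (hδ0 : 0 < δ) (hδ1 : δ < 1)
    (hz : (∑ i, (z i) ^ 2) ≤ (n : ℝ))
    (hy : Real.sqrt ((y - Ldag *ᵥ z) ⬝ᵥ (L *ᵥ (y - Ldag *ᵥ z))) ≤
      δ * Real.sqrt ((Ldag *ᵥ z) ⬝ᵥ (L *ᵥ (Ldag *ᵥ z))))
    -- e is an edge with incidence vector b_e = e_u - e_v, and b_e b_eᵀ ⪯ L
    (u v : Fin n) (huv : u ≠ v) (hedge : w u v ≠ 0)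
    (b : Fin n → ℝ)
    (hb : b = fun i => (if i = u then (1 : ℝ) else 0) - (if i = v then 1 else 0))
    (hbL : (L - vecMulVec b b).PosSemidef) :
    |y ⬝ᵥ (vecMulVec b b *ᵥ y) - z ⬝ᵥ ((Ldag * vecMulVec b b * Ldag) *ᵥ z)| ≤
      6 * δ * (n : ℝ) ^ 5 * U ^ 2 :=
  stmt_17_general n U L Ldag hMP2 hLdagBound z y δ hδ0 hδ1 hz hy b hbL
end
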